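/- For the function σ(u) = (2/3)·log(cosh u) + log(tanh u / u), the Taylor expansion at u = 0 is σ(u) = u⁴/45 + O(u⁶); i.e., σ extends analytically to 0 with σ(0) = 0, σ'(0) = 0, σ''(0) = 0, σ'''(0) = 0, and σ⁗(0)/4! = 1/45. -/

import Mathlib

open Complex Filter Asymptotics Topology

noncomputable def hh : ℂ → ℂ := dslope Complex.sinh 0

noncomputable def ff : ℂ → ℂ :=
  fun u => (2/3) * Complex.log (Complex.cosh u) + Complex.log (hh u / Complex.cosh u)

lemma coeff_eq {f : ℂ → ℂ} {p : FormalMultilinearSeries ℂ ℂ ℂ} {z : ℂ}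
    (hp : HasFPowerSeriesAt f p z) (n : ℕ) :
    iteratedDeriv n f z = (n.factorial : ℂ) * p.coeff n := by
  obtain ⟨r, hr⟩ := hp
  rw [iteratedDeriv_eq_iteratedFDeriv, ← hr.factorial_smul (1 : ℂ) n,
    FormalMultilinearSeries.apply_eq_pow_smul_coeff, one_pow, one_smul, nsmul_eq_mul]

lemma coeff_val {f : ℂ → ℂ} {p : FormalMultilinearSeries ℂ ℂ ℂ} {z : ℂ}
    (hp : HasFPowerSeriesAt f p z) (n : ℕ) {v : ℂ}
    (hv : iteratedDeriv n f z = v) : p.coeff n = v / n.factorial := by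
  rw [← hv, coeff_eq hp n, mul_comm, mul_div_assoc, div_self, mul_one]
  exact_mod_cast n.factorial_ne_zero

lemma taylor_bigO {f : ℂ → ℂ} {p : FormalMultilinearSeries ℂ ℂ ℂ} {z : ℂ}
    (hp : HasFPowerSeriesAt f p z) (n : ℕ) :
    (fun w : ℂ => f (z + w) - ∑ k ∈ Finset.range n, p.coeff k * w ^ k) =O[𝓝 0]
      fun w => w ^ n := by
  have h := hp.isBigO_sub_partialSum_pow n
  have e : (fun w : ℂ => ‖w‖ ^ n) = fun w : ℂ => ‖w ^ n‖ := by
    funext w; rw [norm_pow]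
  rw [e] at h
  refine h.of_norm_right.congr_left fun w => ?_
  congr 1
  simp only [FormalMultilinearSeries.partialSum,
    FormalMultilinearSeries.apply_eq_pow_smul_coeff, smul_eq_mul]
  exact Finset.sum_congr rfl fun k _ => mul_comm _ _

lemma iter_sinh (n : ℕ) :
    iteratedDeriv (2*n) Complex.sinh = Complex.sinh ∧
    iteratedDeriv (2*n+1) Complex.sinh = Complex.cosh := by
  induction n with
  | zero => exact ⟨iteratedDeriv_zero, by rw [iteratedDeriv_one, Complex.deriv_sinh]⟩
  | succ n ih =>
    have e : 2*(n+1) = (2*n+1)+1 := by ring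
    have h1 : iteratedDeriv (2*(n+1)) Complex.sinh = Complex.sinh := by
      rw [e, iteratedDeriv_succ, ih.2, Complex.deriv_cosh]
    exact ⟨h1, by rw [iteratedDeriv_succ, h1, Complex.deriv_sinh]⟩

lemma sinh_even (m : ℕ) : iteratedDeriv (2*m) Complex.sinh 0 = 0 := by
  rw [(iter_sinh m).1, Complex.sinh_zero]

lemma sinh_odd (m : ℕ) : iteratedDeriv (2*m+1) Complex.sinh 0 = 1 := by
  rw [(iter_sinh m).2, Complex.cosh_zero]

lemma cosh_id (k : ℕ) : iteratedDeriv k Complex.cosh 0 = iteratedDeriv (k+1) Complex.sinh 0 := by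
  rw [iteratedDeriv_succ', Complex.deriv_sinh]

lemma extract_step {c : ℂ} {g : ℂ → ℂ} {n : ℕ} (hg : ContinuousAt g 0)
    (h : (fun u => c + u * g u) =o[𝓝[≠] (0:ℂ)] fun u => u ^ (n+1)) :
    c = 0 ∧ g =o[𝓝[≠] (0:ℂ)] fun u => u ^ n := by
  have hc : c = 0 := by
    have h1 : Tendsto (fun u : ℂ => c + u * g u) (𝓝[≠] 0) (𝓝 c) := by
      have hca : ContinuousAt (fun u : ℂ => c + u * g u) 0 :=
        continuousAt_const.add (continuousAt_id.mul hg)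
      have := hca.tendsto.mono_left (nhdsWithin_le_nhds (s := {0}ᶜ))
      simpa using this
    have h2 : Tendsto (fun u : ℂ => c + u * g u) (𝓝[≠] 0) (𝓝 0) := by
      refine h.isBigO.trans_tendsto ?_
      have hp : Tendsto (fun u : ℂ => u ^ (n+1)) (𝓝 0) (𝓝 0) := by
        simpa using (continuous_pow (n+1)).tendsto (0:ℂ)
      exact hp.mono_left nhdsWithin_le_nhds
    exact tendsto_nhds_unique h1 h2
  refine ⟨hc, ?_⟩
  rw [isLittleO_iff] at h ⊢
  intro ε hε
  filter_upwards [h hε, self_mem_nhdsWithin] with u hu hne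
  have hne' : u ≠ 0 := hne
  have h0 : (0:ℝ) < ‖u‖ := norm_pos_iff.mpr hne'
  rw [hc, zero_add, norm_mul, pow_succ, norm_mul] at hu
  have h2 : ‖u‖ * ‖g u‖ ≤ ‖u‖ * (ε * ‖u ^ n‖) := by
    have e : ε * (‖u ^ n‖ * ‖u‖) = ‖u‖ * (ε * ‖u ^ n‖) := by ring
    linarith [hu, e ▸ hu]
  exact le_of_mul_le_mul_left h2 h0

lemma powO {m n : ℕ} (h : m ≤ n) : (fun u : ℂ => u ^ n) =O[𝓝 0] fun u => u ^ m := by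
  rcases eq_or_lt_of_le h with rfl | h
  · exact isBigO_refl _ _
  · exact (isLittleO_pow_pow h).isBigO

lemma mulO {c : ℂ → ℂ} (hc : ContinuousAt c 0) (m : ℕ) :
    (fun u : ℂ => u ^ m * c u) =O[𝓝 0] fun u => u ^ m :=
  ((isBigO_refl (fun u : ℂ => u ^ m) (𝓝 0)).mul (hc.tendsto.isBigO_one ℂ)).congr_right
    fun u => mul_one _

/-- The function σ(u) = (2/3)·log(cosh u) + log(tanh u / u) extends analytically to 0
with σ(0) = σ'(0) = σ''(0) = σ'''(0) = 0 and σ⁗(0)/4! = 1/45. -/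
theorem sigma_expansion_at_zero :
    ∃ f : ℂ → ℂ, AnalyticAt ℂ f 0 ∧
      (∀ᶠ u in nhdsWithin 0 {0}ᶜ,
        f u = (2/3) * Complex.log (Complex.cosh u) + Complex.log (Complex.tanh u / u)) ∧
      f 0 = 0 ∧ iteratedDeriv 1 f 0 = 0 ∧ iteratedDeriv 2 f 0 = 0 ∧
      iteratedDeriv 3 f 0 = 0 ∧ iteratedDeriv 4 f 0 / (Nat.factorial 4) = 1/45 := by
  obtain ⟨ps, hps⟩ := Complex.differentiable_sinh.analyticAt 0
  have php : HasFPowerSeriesAt hh ps.fslope 0 := hps.has_fpower_series_dslope_fslope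
  obtain ⟨pc, hpc⟩ := Complex.differentiable_cosh.analyticAt 0
  have hh0 : hh 0 = 1 := by
    unfold hh
    rw [dslope_same, Complex.deriv_sinh, Complex.cosh_zero]
  -- iterated derivatives of sinh at 0
  have s1 : iteratedDeriv 1 Complex.sinh 0 = 1 := by simpa using sinh_odd 0
  have s2 : iteratedDeriv 2 Complex.sinh 0 = 0 := by simpa using sinh_even 1
  have s3 : iteratedDeriv 3 Complex.sinh 0 = 1 := by
    have := sinh_odd 1; exact this
  have s4 : iteratedDeriv 4 Complex.sinh 0 = 0 := by
    have := sinh_even 2; exact this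
  have s5 : iteratedDeriv 5 Complex.sinh 0 = 1 := by
    have := sinh_odd 2; exact this
  have s6 : iteratedDeriv 6 Complex.sinh 0 = 0 := by
    have := sinh_even 3; exact this
  -- coefficients of the cosh series
  have pc0 : pc.coeff 0 = 1 := by
    rw [coeff_val hpc 0 ((cosh_id 0).trans s1)]; norm_num [Nat.factorial]
  have pc1 : pc.coeff 1 = 0 := by
    rw [coeff_val hpc 1 ((cosh_id 1).trans s2)]; norm_num
  have pc2 : pc.coeff 2 = 1/2 := by
    rw [coeff_val hpc 2 ((cosh_id 2).trans s3)]; norm_num [Nat.factorial]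
  have pc3 : pc.coeff 3 = 0 := by
    rw [coeff_val hpc 3 ((cosh_id 3).trans s4)]; norm_num
  have pc4 : pc.coeff 4 = 1/24 := by
    rw [coeff_val hpc 4 ((cosh_id 4).trans s5)]; norm_num [Nat.factorial]
  have pc5 : pc.coeff 5 = 0 := by
    rw [coeff_val hpc 5 ((cosh_id 5).trans s6)]; norm_num
  -- coefficients of the hh series
  have ph0 : ps.fslope.coeff 0 = 1 := by
    rw [FormalMultilinearSeries.coeff_fslope, coeff_val hps 1 s1]; norm_num [Nat.factorial]
  have ph1 : ps.fslope.coeff 1 = 0 := by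
    rw [FormalMultilinearSeries.coeff_fslope, coeff_val hps 2 s2]; norm_num
  have ph2 : ps.fslope.coeff 2 = 1/6 := by
    rw [FormalMultilinearSeries.coeff_fslope, coeff_val hps 3 s3]; norm_num [Nat.factorial]
  have ph3 : ps.fslope.coeff 3 = 0 := by
    rw [FormalMultilinearSeries.coeff_fslope, coeff_val hps 4 s4]; norm_num
  have ph4 : ps.fslope.coeff 4 = 1/120 := by
    rw [FormalMultilinearSeries.coeff_fslope, coeff_val hps 5 s5]; norm_num [Nat.factorial]
  have ph5 : ps.fslope.coeff 5 = 0 := by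
    rw [FormalMultilinearSeries.coeff_fslope, coeff_val hps 6 s6]; norm_num
  -- Taylor expansions of cosh and hh
  have A : (fun u : ℂ => Complex.cosh u - (1 + u^2/2 + u^4/24)) =O[𝓝 0] fun u => u^6 := by
    refine (taylor_bigO hpc 6).congr_left fun u => ?_
    simp only [zero_add, Finset.sum_range_succ, Finset.sum_range_zero,
      pc0, pc1, pc2, pc3, pc4, pc5]
    ring
  have B : (fun u : ℂ => hh u - (1 + u^2/6 + u^4/120)) =O[𝓝 0] fun u => u^6 := by
    refine (taylor_bigO php 6).congr_left fun u => ?_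
    simp only [zero_add, Finset.sum_range_succ, Finset.sum_range_zero,
      ph0, ph1, ph2, ph3, ph4, ph5]
    ring
  -- Taylor expansion of log at 1
  obtain ⟨pl, hpl⟩ := analyticAt_clog (by simp : (1:ℂ) ∈ Complex.slitPlane)
  have l0 : iteratedDeriv 0 Complex.log 1 = 0 := by
    rw [iteratedDeriv_zero, Complex.log_one]
  have l1 : iteratedDeriv 1 Complex.log 1 = 1 := by
    rw [iteratedDeriv_one, (Complex.hasDerivAt_log (by simp)).deriv]; norm_num
  have l2 : iteratedDeriv 2 Complex.log 1 = -1 := by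
    have levd : deriv Complex.log =ᶠ[𝓝 (1:ℂ)] fun z => z⁻¹ := by
      filter_upwards [Complex.isOpen_slitPlane.mem_nhds (by simp)] with z hz
      exact (Complex.hasDerivAt_log hz).deriv
    rw [show (2:ℕ) = 1+1 from rfl, iteratedDeriv_succ, iteratedDeriv_one,
      levd.deriv_eq, deriv_inv]
    norm_num
  have pl0 : pl.coeff 0 = 0 := by rw [coeff_val hpl 0 l0]; norm_num
  have pl1 : pl.coeff 1 = 1 := by rw [coeff_val hpl 1 l1]; norm_num
  have pl2 : pl.coeff 2 = -(1/2) := by rw [coeff_val hpl 2 l2]; norm_num [Nat.factorial]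
  have Llog : (fun w : ℂ => Complex.log (1 + w) - (w - w^2/2)) =O[𝓝 0] fun w => w^3 := by
    refine (taylor_bigO hpl 3).congr_left fun w => ?_
    simp only [Finset.sum_range_succ, Finset.sum_range_zero, pl0, pl1, pl2]
    ring
  -- continuity facts
  have hhc : ContinuousAt hh 0 := php.analyticAt.continuousAt
  have ccosh : ContinuousAt Complex.cosh 0 := Complex.continuous_cosh.continuousAt
  have hdivc : ContinuousAt (fun u : ℂ => hh u / Complex.cosh u) 0 :=
    hhc.div ccosh (by simp)
  -- first log term
  have tw1 : Tendsto (fun u : ℂ => Complex.cosh u - 1) (𝓝 0) (𝓝 0) := by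
    have h : Continuous (fun u : ℂ => Complex.cosh u - 1) :=
      Complex.continuous_cosh.sub continuous_const
    simpa using h.tendsto (0:ℂ)
  have w1O : (fun u : ℂ => Complex.cosh u - 1) =O[𝓝 0] fun u => u^2 := by
    have t2 : (fun u : ℂ => u^2 * (1/2 + u^2/24)) =O[𝓝 0] fun u => u^2 :=
      mulO (by fun_prop) 2
    exact ((A.trans (powO (by norm_num))).add t2).congr_left fun u => by ring
  have step1 : (fun u : ℂ => Complex.log (Complex.cosh u) -
      ((Complex.cosh u - 1) - (Complex.cosh u - 1)^2/2)) =O[𝓝 0]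
      fun u => (Complex.cosh u - 1)^3 := by
    refine (Llog.comp_tendsto tw1).congr_left fun u => ?_
    simp only [Function.comp]
    rw [show (1:ℂ) + (Complex.cosh u - 1) = Complex.cosh u by ring]
  have cube1 : (fun u : ℂ => (Complex.cosh u - 1)^3) =O[𝓝 0] fun u => u^6 :=
    (w1O.pow 3).congr_right fun u => by ring
  have R1O : (fun u : ℂ => Complex.log (Complex.cosh u) - (u^2/2 - u^4/12)) =O[𝓝 0]
      fun u => u^6 := by
    have t1 := step1.trans cube1
    have t2 : (fun u : ℂ => (Complex.cosh u - (1 + u^2/2 + u^4/24)) *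
        (1 - (u^2/2 + u^4/24) - (Complex.cosh u - (1 + u^2/2 + u^4/24))/2)) =O[𝓝 0]
        fun u => u^6 := by
      have hcont : ContinuousAt (fun u : ℂ => 1 - (u^2/2 + u^4/24) -
          (Complex.cosh u - (1 + u^2/2 + u^4/24))/2) 0 := by
        exact (continuousAt_const.sub (by fun_prop)).sub
          ((ccosh.sub (by fun_prop)).div_const 2)
      exact (A.mul (hcont.tendsto.isBigO_one ℂ)).congr_right fun u => mul_one _
    have t3 : (fun u : ℂ => u^6 * (-(1:ℂ)/48 - u^2/1152)) =O[𝓝 0] fun u => u^6 :=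
      mulO (by fun_prop) 6
    exact ((t1.add t2).add t3).congr_left fun u => by ring
  -- second log term
  have evc : ∀ᶠ u in 𝓝 (0:ℂ), Complex.cosh u ≠ 0 := ccosh.eventually_ne (by simp)
  have NuO : (fun u : ℂ => hh u - (1 + (-u^2/3 + 2*u^4/15)) * Complex.cosh u) =O[𝓝 0]
      fun u => u^6 := by
    have t2 : (fun u : ℂ => (1 + (-u^2/3 + 2*u^4/15)) *
        (Complex.cosh u - (1 + u^2/2 + u^4/24))) =O[𝓝 0] fun u => u^6 := by
      have hcont : ContinuousAt (fun u : ℂ => 1 + (-u^2/3 + 2*u^4/15)) 0 := by fun_prop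
      exact ((hcont.tendsto.isBigO_one ℂ).mul A).congr_right fun u => one_mul _
    have t3 : (fun u : ℂ => u^6 * (-(19:ℂ)/360 - u^2/180)) =O[𝓝 0] fun u => u^6 :=
      mulO (by fun_prop) 6
    exact ((B.sub t2).add t3).congr_left fun u => by ring
  have invO : (fun u : ℂ => (Complex.cosh u)⁻¹) =O[𝓝 0] (fun _ : ℂ => (1:ℂ)) := by
    have h : Tendsto (fun u : ℂ => (Complex.cosh u)⁻¹) (𝓝 0) (𝓝 (Complex.cosh 0)⁻¹) :=
      (Complex.continuous_cosh.tendsto 0).inv₀ (by simp)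
    exact h.isBigO_one ℂ
  have e2O : (fun u : ℂ => hh u / Complex.cosh u - 1 - (-u^2/3 + 2*u^4/15)) =O[𝓝 0]
      fun u => u^6 := by
    have hm := (NuO.mul invO).congr_right fun u : ℂ => mul_one (u^6)
    refine hm.congr' ?_ EventuallyEq.rfl
    filter_upwards [evc] with u hu
    field_simp
    ring
  have w2O : (fun u : ℂ => hh u / Complex.cosh u - 1) =O[𝓝 0] fun u => u^2 := by
    have t2 : (fun u : ℂ => u^2 * (-(1:ℂ)/3 + 2*u^2/15)) =O[𝓝 0] fun u => u^2 :=
      mulO (by fun_prop) 2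
    exact ((e2O.trans (powO (by norm_num))).add t2).congr_left fun u => by ring
  have tw2 : Tendsto (fun u : ℂ => hh u / Complex.cosh u - 1) (𝓝 0) (𝓝 0) := by
    have hca : ContinuousAt (fun u : ℂ => hh u / Complex.cosh u - 1) 0 :=
      hdivc.sub continuousAt_const
    simpa [hh0] using hca.tendsto
  have step2 : (fun u : ℂ => Complex.log (hh u / Complex.cosh u) -
      ((hh u / Complex.cosh u - 1) - (hh u / Complex.cosh u - 1)^2/2)) =O[𝓝 0]
      fun u => (hh u / Complex.cosh u - 1)^3 := by
    refine (Llog.comp_tendsto tw2).congr_left fun u => ?_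
    simp only [Function.comp]
    rw [show (1:ℂ) + (hh u / Complex.cosh u - 1) = hh u / Complex.cosh u by ring]
  have cube2 : (fun u : ℂ => (hh u / Complex.cosh u - 1)^3) =O[𝓝 0] fun u => u^6 :=
    (w2O.pow 3).congr_right fun u => by ring
  have R2O : (fun u : ℂ => Complex.log (hh u / Complex.cosh u) - (-u^2/3 + 7*u^4/90))
      =O[𝓝 0] fun u => u^6 := by
    have t1 := step2.trans cube2
    have t2 : (fun u : ℂ => (hh u / Complex.cosh u - 1 - (-u^2/3 + 2*u^4/15)) *
        (1 - (hh u / Complex.cosh u - 1 - (-u^2/3 + 2*u^4/15))/2 - (-u^2/3 + 2*u^4/15)))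
        =O[𝓝 0] fun u => u^6 := by
      have hcont : ContinuousAt (fun u : ℂ => 1 - (hh u / Complex.cosh u - 1 -
          (-u^2/3 + 2*u^4/15))/2 - (-u^2/3 + 2*u^4/15)) 0 := by
        exact (continuousAt_const.sub
          (((hdivc.sub continuousAt_const).sub (by fun_prop)).div_const 2)).sub (by fun_prop)
      exact (e2O.mul (hcont.tendsto.isBigO_one ℂ)).congr_right fun u => mul_one _
    have t3 : (fun u : ℂ => u^6 * ((2:ℂ)/45 - 2*u^2/225)) =O[𝓝 0] fun u => u^6 :=
      mulO (by fun_prop) 6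
    exact ((t1.add t2).add t3).congr_left fun u => by ring
  -- the main asymptotics
  have Ef : (fun u : ℂ => ff u - u^4/45) =o[𝓝 0] fun u => u^4 := by
    have hO : (fun u : ℂ => ff u - u^4/45) =O[𝓝 0] fun u => u^6 := by
      refine ((R1O.const_mul_left (2/3 : ℂ)).add R2O).congr_left fun u => ?_
      simp only [ff]
      ring
    exact hO.trans_isLittleO (isLittleO_pow_pow (by norm_num))
  -- analyticity
  have ffan : AnalyticAt ℂ ff 0 := by
    have h1 : AnalyticAt ℂ Complex.cosh 0 := hpc.analyticAt
    have h2 : AnalyticAt ℂ hh 0 := php.analyticAt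
    have hdiv : AnalyticAt ℂ (fun u => hh u / Complex.cosh u) 0 := h2.div h1 (by simp)
    exact (analyticAt_const.mul (h1.clog (by simp))).add (hdiv.clog (by simp [hh0]))
  obtain ⟨pf, hpf⟩ := id ffan
  have S : (fun u : ℂ => ff u - ∑ k ∈ Finset.range 5, pf.coeff k * u ^ k) =o[𝓝 0]
      fun u => u^4 := by
    have h := (taylor_bigO hpf 5).trans_isLittleO (isLittleO_pow_pow (show 4 < 5 by norm_num))
    exact h.congr_left fun u => by rw [zero_add]
  have D : (fun u : ℂ => pf.coeff 0 + u * (pf.coeff 1 + u * (pf.coeff 2 + u *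
      (pf.coeff 3 + u * (pf.coeff 4 - 1/45))))) =o[𝓝[≠] (0:ℂ)] fun u => u^4 := by
    have h2 : (fun u : ℂ => pf.coeff 0 + u * (pf.coeff 1 + u * (pf.coeff 2 + u *
        (pf.coeff 3 + u * (pf.coeff 4 - 1/45))))) =o[𝓝 0] fun u => u^4 :=
      (Ef.sub S).congr_left fun u => by
        simp only [Finset.sum_range_succ, Finset.sum_range_zero]; ring
    exact h2.mono nhdsWithin_le_nhds
  obtain ⟨hc0, E1⟩ := extract_step (n := 3)
    (g := fun u : ℂ => pf.coeff 1 + u * (pf.coeff 2 + u * (pf.coeff 3 + u * (pf.coeff 4 - 1/45))))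
    (by fun_prop) D
  obtain ⟨hc1, E2⟩ := extract_step (n := 2)
    (g := fun u : ℂ => pf.coeff 2 + u * (pf.coeff 3 + u * (pf.coeff 4 - 1/45)))
    (by fun_prop) E1
  obtain ⟨hc2, E3⟩ := extract_step (n := 1)
    (g := fun u : ℂ => pf.coeff 3 + u * (pf.coeff 4 - 1/45))
    (by fun_prop) E2
  obtain ⟨hc3, E4⟩ := extract_step (n := 0)
    (g := fun u : ℂ => pf.coeff 4 - 1/45)
    (by fun_prop) E3
  have hc4 : pf.coeff 4 = 1/45 := by
    have h1 : Tendsto (fun _ : ℂ => pf.coeff 4 - 1/45) (𝓝[≠] (0:ℂ))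
        (𝓝 (pf.coeff 4 - 1/45)) := tendsto_const_nhds
    have h2 : Tendsto (fun _ : ℂ => pf.coeff 4 - 1/45) (𝓝[≠] (0:ℂ)) (𝓝 0) :=
      (isLittleO_one_iff ℂ).mp (E4.congr_right fun u : ℂ => pow_zero u)
    have := tendsto_nhds_unique h1 h2
    linear_combination this
  refine ⟨ff, ffan, ?_, ?_, ?_, ?_, ?_, ?_⟩
  · have evc' : ∀ᶠ u in 𝓝[≠] (0:ℂ), Complex.cosh u ≠ 0 :=
      evc.filter_mono nhdsWithin_le_nhds
    filter_upwards [evc', self_mem_nhdsWithin] with u hcu hu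
    have hu0 : u ≠ 0 := hu
    have hhu : hh u = Complex.sinh u / u := by
      unfold hh
      rw [dslope_of_ne _ hu0, slope_def_field]
      simp
    simp only [ff, hhu]
    rw [Complex.tanh_eq_sinh_div_cosh, div_div, div_div, mul_comm u (Complex.cosh u)]
  · simp [ff, hh0, Complex.log_one]
  · rw [coeff_eq hpf 1, hc1, mul_zero]
  · rw [coeff_eq hpf 2, hc2, mul_zero]
  · rw [coeff_eq hpf 3, hc3, mul_zero]
  · rw [coeff_eq hpf 4, hc4]
    norm_num [Nat.factorial]
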